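/- Fix n ≥ 3. An ortholattice L satisfies Godowski's equation n-Go (for all a₁, …, aₙ ∈ L, (a₁ →₁ a₂) ⊓ … ⊓ (aₙ₋₁ →₁ aₙ) ⊓ (aₙ →₁ a₁) = (aₙ →₁ aₙ₋₁) ⊓ … ⊓ (a₂ →₁ a₁) ⊓ (a₁ →₁ aₙ)) if and only if L satisfies, for all a₁, …, aₙ ∈ L, the identity (a₁ →₁ a₂) ⊓ … ⊓ (aₙ₋₁ →₁ aₙ) ⊓ (aₙ →₁ a₁) = (a₁ ≡ a₂) ⊓ (a₂ ≡ a₃) ⊓ … ⊓ (aₙ₋₁ ≡ aₙ). -/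

import Mathlib

/-- An ortholattice: a bounded lattice with an orthocomplementation. -/
class Ortholattice (α : Type*) extends Lattice α, BoundedOrder α, Compl α where
  compl_compl : ∀ x : α, xᶜᶜ = x
  compl_antitone : ∀ x y : α, x ≤ y → yᶜ ≤ xᶜ
  inf_compl : ∀ x : α, x ⊓ xᶜ = ⊥
  sup_compl : ∀ x : α, x ⊔ xᶜ = ⊤

/-- The Sasaki implication `a →₁ b = aᶜ ⊔ (a ⊓ b)`. -/
def olImp1 {α : Type*} [Ortholattice α] (a b : α) : α := aᶜ ⊔ (a ⊓ b)

/-- The identity operation `a ≡ b = (a ⊓ b) ⊔ (aᶜ ⊓ bᶜ)`. -/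
def olEquiv {α : Type*} [Ortholattice α] (a b : α) : α := (a ⊓ b) ⊔ (aᶜ ⊓ bᶜ)

/-!
Putting `a = (x, c, ⊥, …, ⊥)` with `c ≤ x` into n-Go yields the orthomodular law. In an
orthomodular lattice `(a →₁ b) ⊓ (b →₁ a) ≤ a ≡ b ≤ a →₁ b`, and `≡` is transitive because
`a ≡ b` and `b ≡ c` both commute with `b`. Hence, under n-Go, the cycle of Sasaki implications lies
below every `aᵢ ≡ aᵢ₊₁`, while the chain of identities lies below every `aᵢ ≡ aⱼ` and so below every
term of the cycle. Conversely, the chain of identities does not change when `a` is reversed,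
whereas reversing `a` turns the left side of n-Go into its right side.
-/

namespace Ortholattice

variable {α : Type*} [Ortholattice α] {x y z : α}

theorem compl_le_compl (h : x ≤ y) : yᶜ ≤ xᶜ := compl_antitone x y h

theorem compl_le_compl_iff : xᶜ ≤ yᶜ ↔ y ≤ x :=
  ⟨fun h => by simpa only [compl_compl] using compl_le_compl h, compl_le_compl⟩

theorem le_compl_comm : x ≤ yᶜ ↔ y ≤ xᶜ := by
  rw [← compl_le_compl_iff, compl_compl]

theorem compl_sup (x y : α) : (x ⊔ y)ᶜ = xᶜ ⊓ yᶜ :=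
  le_antisymm (le_inf (compl_le_compl le_sup_left) (compl_le_compl le_sup_right))
    (le_compl_comm.1 (sup_le (le_compl_comm.1 inf_le_left) (le_compl_comm.1 inf_le_right)))

theorem compl_inf (x y : α) : (x ⊓ y)ᶜ = xᶜ ⊔ yᶜ := by
  rw [← compl_compl (xᶜ ⊔ yᶜ), compl_sup, compl_compl, compl_compl]

theorem compl_bot : (⊥ : α)ᶜ = ⊤ := by
  simpa only [bot_sup_eq] using sup_compl (⊥ : α)

theorem olImp1_bot_left (y : α) : olImp1 ⊥ y = ⊤ := by
  simp only [olImp1, compl_bot, top_sup_eq]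

theorem olImp1_bot_right (x : α) : olImp1 x ⊥ = xᶜ := by
  simp only [olImp1, inf_bot_eq, sup_bot_eq]

theorem olEquiv_comm (x y : α) : olEquiv x y = olEquiv y x := by
  simp only [olEquiv, inf_comm]

theorem olEquiv_self (x : α) : olEquiv x x = ⊤ := by
  simp only [olEquiv, inf_idem, sup_compl]

theorem olEquiv_le_olImp1 (x y : α) : olEquiv x y ≤ olImp1 x y :=
  sup_le le_sup_right (inf_le_left.trans le_sup_left)

open Finset

def sasakiCycle {n : ℕ} [NeZero n] (a : Fin n → α) : α :=
  univ.inf fun i => olImp1 (a i) (a (i + 1))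

def equivChain {n : ℕ} (a : Fin (n + 1) → α) : α :=
  univ.inf fun i : Fin n => olEquiv (a i.castSucc) (a i.succ)

theorem sasakiCycle_comp_rev {n : ℕ} [NeZero n] (a : Fin n → α) :
    sasakiCycle (a ∘ Fin.rev) = univ.inf fun i => olImp1 (a (i + 1)) (a i) := by
  set e : Fin n ≃ Fin n := (Equiv.addRight 1).trans Fin.revPerm
  calc sasakiCycle (a ∘ Fin.rev) = univ.inf ((fun i => olImp1 (a (i + 1)) (a i)) ∘ e) := by
        unfold sasakiCycle
        congr 1
        funext i
        simp only [Function.comp_apply, Fin.rev_add, Equiv.coe_trans, Equiv.coe_addRight,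
          Fin.revPerm_apply, sub_add_cancel, e]
    _ = univ.inf fun i => olImp1 (a (i + 1)) (a i) := by
        rw [← Equiv.coe_toEmbedding, ← inf_map, univ_map_equiv_to_embedding]

theorem equivChain_comp_rev {n : ℕ} (a : Fin (n + 1) → α) :
    equivChain (a ∘ Fin.rev) = equivChain a := by
  calc equivChain (a ∘ Fin.rev)
        = univ.inf ((fun i : Fin n => olEquiv (a i.castSucc) (a i.succ)) ∘ Fin.revPerm) := by
        unfold equivChain
        congr 1
        funext i
        simp only [Function.comp_apply, Fin.rev_castSucc, Fin.rev_succ, olEquiv_comm,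
          Fin.revPerm_apply]
    _ = equivChain a := by
        rw [← Equiv.coe_toEmbedding, ← inf_map, univ_map_equiv_to_embedding]; rfl

def IsOrthomodular (α : Type*) [Ortholattice α] : Prop :=
  ∀ ⦃x y : α⦄, x ≤ y → x ⊔ (y ⊓ xᶜ) = y

namespace IsOrthomodular

variable (h : IsOrthomodular α)
include h

theorem sup_compl_inf_eq (hxy : x ≤ y) : (x ⊔ yᶜ) ⊓ y = x := calc
  (x ⊔ yᶜ) ⊓ y = (yᶜ ⊔ xᶜ ⊓ yᶜᶜ)ᶜ := by
    simp only [compl_sup, compl_inf, compl_compl]; rw [inf_comm, sup_comm]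
  _ = x := by rw [h (compl_le_compl hxy), compl_compl]

theorem sup_inf_eq_of_le_of_le_compl {u v b : α} (hu : u ≤ b) (hv : v ≤ bᶜ) : (u ⊔ v) ⊓ b = u :=
  le_antisymm ((inf_le_inf_right b (sup_le_sup_left hv u)).trans (h.sup_compl_inf_eq hu).le)
    (le_inf le_sup_left hu)

theorem olImp1_inf_olImp1_le (x y : α) : olImp1 x y ⊓ olImp1 y x ≤ olEquiv x y := by
  set p := x ⊓ y
  set t := (xᶜ ⊔ p) ⊓ (yᶜ ⊔ p)
  have ht : olImp1 x y ⊓ olImp1 y x = t := by rw [olImp1, olImp1, inf_comm y x]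
  have hpc : p ≤ pᶜᶜ := (compl_compl p).ge
  have htx : t ⊓ pᶜ ≤ xᶜ := calc
    t ⊓ pᶜ ≤ (xᶜ ⊔ p) ⊓ pᶜ := inf_le_inf_right _ inf_le_left
    _ = xᶜ := h.sup_inf_eq_of_le_of_le_compl (compl_le_compl inf_le_left) hpc
  have hty : t ⊓ pᶜ ≤ yᶜ := calc
    t ⊓ pᶜ ≤ (yᶜ ⊔ p) ⊓ pᶜ := inf_le_inf_right _ inf_le_right
    _ = yᶜ := h.sup_inf_eq_of_le_of_le_compl (compl_le_compl inf_le_right) hpc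
  calc olImp1 x y ⊓ olImp1 y x = p ⊔ t ⊓ pᶜ := ht.trans (h (le_inf le_sup_right le_sup_right)).symm
    _ ≤ olEquiv x y := sup_le_sup_left (le_inf htx hty) p

/-- The hypothesis is a form of "`x` commutes with `y`" which, unlike the decomposition it yields,
is evidently stable under meets. -/
theorem le_inf_sup_inf_compl (hx : (x ⊔ yᶜ) ⊓ y ≤ x) : x ≤ x ⊓ y ⊔ x ⊓ yᶜ := by
  set u := x ⊓ y
  have hxu : x ≤ u ⊔ yᶜ := calc
    x ≤ x ⊔ yᶜ := le_sup_left
    _ = yᶜ ⊔ ((x ⊔ yᶜ) ⊓ yᶜᶜ) := (h le_sup_right).symm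
    _ ≤ u ⊔ yᶜ := by rw [compl_compl, sup_comm]; exact sup_le_sup_right (le_inf hx inf_le_right) _
  have hxuc : x ⊓ uᶜ ≤ yᶜ := calc
    x ⊓ uᶜ ≤ (yᶜ ⊔ u) ⊓ uᶜ := inf_le_inf_right _ (sup_comm u yᶜ ▸ hxu)
    _ = yᶜ := h.sup_inf_eq_of_le_of_le_compl (compl_le_compl inf_le_right) (compl_compl u).ge
  calc x = u ⊔ x ⊓ uᶜ := (h inf_le_left).symm
    _ ≤ u ⊔ x ⊓ yᶜ := sup_le_sup_left (le_inf inf_le_left hxuc) u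

theorem olEquiv_inf_right (x y : α) : olEquiv x y ⊓ y = x ⊓ y :=
  h.sup_inf_eq_of_le_of_le_compl inf_le_right inf_le_right

theorem olEquiv_inf_compl_right (x y : α) : olEquiv x y ⊓ yᶜ = xᶜ ⊓ yᶜ := by
  rw [olEquiv, sup_comm]
  exact h.sup_inf_eq_of_le_of_le_compl inf_le_right (inf_le_right.trans (compl_compl y).ge)

theorem olEquiv_sup_compl_inf_le (x y : α) : (olEquiv x y ⊔ yᶜ) ⊓ y ≤ olEquiv x y := by
  have hsup : olEquiv x y ⊔ yᶜ = x ⊓ y ⊔ yᶜ := by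
    rw [olEquiv, sup_assoc, sup_eq_right.2 (inf_le_right : xᶜ ⊓ yᶜ ≤ yᶜ)]
  rw [hsup, h.sup_inf_eq_of_le_of_le_compl inf_le_right le_rfl]
  exact le_sup_left

theorem olEquiv_inf_olEquiv_le (x y z : α) : olEquiv x y ⊓ olEquiv y z ≤ olEquiv x z := by
  rw [olEquiv_comm y z]
  set e := olEquiv x y
  set f := olEquiv z y
  have hcomm : (e ⊓ f ⊔ yᶜ) ⊓ y ≤ e ⊓ f :=
    le_inf ((inf_le_inf_right y (sup_le_sup_right inf_le_left _)).trans
        (h.olEquiv_sup_compl_inf_le x y))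
      ((inf_le_inf_right y (sup_le_sup_right inf_le_right _)).trans
        (h.olEquiv_sup_compl_inf_le z y))
  have hy : e ⊓ f ⊓ y ≤ x ⊓ z :=
    le_inf ((inf_le_inf_right y inf_le_left).trans ((h.olEquiv_inf_right x y).trans_le inf_le_left))
      ((inf_le_inf_right y inf_le_right).trans ((h.olEquiv_inf_right z y).trans_le inf_le_left))
  have hyc : e ⊓ f ⊓ yᶜ ≤ xᶜ ⊓ zᶜ :=
    le_inf ((inf_le_inf_right _ inf_le_left).trans
        ((h.olEquiv_inf_compl_right x y).trans_le inf_le_left))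
      ((inf_le_inf_right _ inf_le_right).trans
        ((h.olEquiv_inf_compl_right z y).trans_le inf_le_left))
  exact (h.le_inf_sup_inf_compl hcomm).trans (sup_le_sup hy hyc)

theorem equivChain_le_olEquiv {n : ℕ} (a : Fin (n + 1) → α) (i j : Fin (n + 1)) :
    equivChain a ≤ olEquiv (a i) (a j) := by
  have from_zero : ∀ k, equivChain a ≤ olEquiv (a 0) (a k) := by
    refine Fin.induction (by rw [olEquiv_self]; exact le_top) fun k hk => ?_
    exact (le_inf hk (inf_le (mem_univ k))).trans (h.olEquiv_inf_olEquiv_le _ _ _)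
  calc equivChain a ≤ olEquiv (a i) (a 0) ⊓ olEquiv (a 0) (a j) :=
        le_inf (olEquiv_comm (a 0) (a i) ▸ from_zero i) (from_zero j)
    _ ≤ olEquiv (a i) (a j) := h.olEquiv_inf_olEquiv_le _ _ _

theorem equivChain_le_sasakiCycle {n : ℕ} (a : Fin (n + 1) → α) : equivChain a ≤ sasakiCycle a :=
  Finset.le_inf fun i _ => (h.equivChain_le_olEquiv a i (i + 1)).trans (olEquiv_le_olImp1 _ _)

theorem sasakiCycle_le_equivChain {n : ℕ} (a : Fin (n + 1) → α)
    (hGo : sasakiCycle a = univ.inf fun i => olImp1 (a (i + 1)) (a i)) :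
    sasakiCycle a ≤ equivChain a := by
  refine Finset.le_inf fun i _ => (le_inf ?_ ?_).trans (h.olImp1_inf_olImp1_le _ _)
  · rw [← Fin.coeSucc_eq_succ]
    exact inf_le (mem_univ i.castSucc)
  · rw [hGo, ← Fin.coeSucc_eq_succ]
    exact inf_le (f := fun i => olImp1 (a (i + 1)) (a i)) (mem_univ i.castSucc)

end IsOrthomodular

theorem isOrthomodular_of_godowski {n : ℕ}
    (hGo : ∀ a : Fin (n + 3) → α, sasakiCycle a = univ.inf fun i => olImp1 (a (i + 1)) (a i)) :
    IsOrthomodular α := by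
  intro c x hcx
  refine le_antisymm (sup_le hcx inf_le_left) (compl_le_compl_iff.1 ?_)
  -- on `(x, c, ⊥, …, ⊥)` the cycle is `(x →₁ c) ⊓ cᶜ` and the reversed cycle contains `x →₁ ⊥ = xᶜ`
  set a : Fin (n + 3) → α := fun i => if i = 0 then x else if i = 1 then c else ⊥
  have hone_add_one : (1 + 1 : Fin (n + 3)) ≠ 0 ∧ (1 + 1 : Fin (n + 3)) ≠ 1 := by
    simp [Fin.ext_iff, Fin.val_add, Nat.mod_eq_of_lt (show 2 < n + 3 by omega)]
  have hlast : Fin.last (n + 2) ≠ 0 ∧ Fin.last (n + 2) ≠ 1 := by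
    simp [Fin.ext_iff]
  calc (c ⊔ x ⊓ cᶜ)ᶜ = cᶜ ⊓ (xᶜ ⊔ c) := by simp only [compl_sup, compl_inf, compl_compl]
    _ ≤ sasakiCycle a := by
      refine Finset.le_inf fun i _ => ?_
      by_cases hi0 : i = 0
      · simp [a, hi0, olImp1, inf_eq_right.2 hcx]
      by_cases hi1 : i = 1
      · simp [a, hi1, hone_add_one, olImp1_bot_right]
      · simp [a, hi0, hi1, olImp1_bot_left]
    _ = univ.inf fun i => olImp1 (a (i + 1)) (a i) := hGo a
    _ ≤ olImp1 (a (Fin.last (n + 2) + 1)) (a (Fin.last (n + 2))) := inf_le (mem_univ _)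
    _ = xᶜ := by simp [a, Fin.last_add_one, hlast, olImp1_bot_right]

end Ortholattice

/-- For fixed n ≥ 3 (here n = m + 3), an ortholattice satisfies Godowski'\''s equation
n-Go iff it satisfies the identity equating the Godowski identity with the chained
identity. -/
theorem stmt_8 (α : Type*) [Ortholattice α] (m : ℕ) :
    (∀ a : Fin (m + 3) → α,
        (Finset.univ.inf fun i => olImp1 (a i) (a (i + 1))) =
          (Finset.univ.inf fun i => olImp1 (a (i + 1)) (a i))) ↔
      (∀ a : Fin (m + 3) → α,
        (Finset.univ.inf fun i => olImp1 (a i) (a (i + 1))) =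
          (Finset.univ.inf fun i : Fin (m + 2) => olEquiv (a i.castSucc) (a i.succ))) := by
  constructor
  · intro hGo a
    have hOM := Ortholattice.isOrthomodular_of_godowski hGo
    exact le_antisymm (hOM.sasakiCycle_le_equivChain a (hGo a)) (hOM.equivChain_le_sasakiCycle a)
  · intro hChain a
    calc _ = Ortholattice.equivChain a := hChain a
      _ = Ortholattice.equivChain (a ∘ Fin.rev) := (Ortholattice.equivChain_comp_rev a).symm
      _ = Ortholattice.sasakiCycle (a ∘ Fin.rev) := (hChain _).symm
      _ = _ := Ortholattice.sasakiCycle_comp_rev a
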